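/- Let X ∈ ℝ^{m×n}, r < min{m,n}, and partition the SVD of X as X = U diag(Σ₁, Σ₂) [V₁ᵀ; V₂ᵀ]. Let Ω be an n×ℓ test matrix, set Ω₁ = V₁ᵀΩ and Ω₂ = V₂ᵀΩ, and suppose Ω₁ has full row rank. If Q is an orthonormal basis for range(XΩ), then ‖X − QQᵀX‖_F² ≤ (1 + ‖Ω₂‖₂² ‖Ω₁†‖₂²) ‖Σ₂‖_F². -/

import Mathlib

open Matrix

/-- The spectral norm of a real matrix: its largest singular value, i.e. the square root of
the largest eigenvalue of `A * Aᵀ`. -/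
noncomputable def specNorm {m n : Type*} [Fintype m] [DecidableEq m] [Fintype n]
    (A : Matrix m n ℝ) : ℝ :=
  Real.sqrt (((Finset.univ.val.map
    (Matrix.isHermitian_mul_conjTranspose_self A).eigenvalues).sort (· ≤ ·)).reverse.getD 0 0)

/-- The squared Frobenius norm of a matrix. -/
noncomputable def frob2 {m n : Type*} [Fintype m] [Fintype n] (A : Matrix m n ℝ) : ℝ :=
  ∑ i, ∑ j, A i j ^ 2

/-- The Moore–Penrose pseudoinverse of a matrix with full row rank: `A† = Aᵀ (A Aᵀ)⁻¹`. -/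
noncomputable def pinvFullRowRank {m n : Type*} [Fintype m] [Fintype n] [DecidableEq m]
    (A : Matrix m n ℝ) : Matrix n m ℝ := Aᵀ * (A * Aᵀ)⁻¹

section Auxiliary


lemma sorted_le_getLast : ∀ (l : List ℝ), l.Pairwise (· ≤ ·) → ∀ x ∈ l, ∀ h : l ≠ [], x ≤ l.getLast h
  | [], _, x, hx, h => by simp at hx
  | a :: t, hs, x, hx, h => by
    rcases t.eq_nil_or_concat with rfl | ⟨t', b, rfl⟩
    · simp at hx; simp [hx]
    · have ht : t'.concat b ≠ [] := by simp
      rw [List.getLast_cons ht]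
      rcases List.mem_cons.1 hx with rfl | hm
      · exact (List.pairwise_cons.1 hs).1 _ (List.getLast_mem ht)
      · exact sorted_le_getLast _ hs.of_cons x hm ht

lemma sortedMax_aux {s : Multiset ℝ} (hne : s.sort (· ≤ ·) ≠ []) :
    ∃ h : s.sort (· ≤ ·) ≠ [], ((s.sort (· ≤ ·)).reverse.getD 0 0 : ℝ)
      = (s.sort (· ≤ ·)).getLast h := by
  refine ⟨hne, ?_⟩
  have hlt : Multiset.card s - 1 < (s.sort (· ≤ ·)).length := by
    rw [Multiset.length_sort]
    have : s ≠ 0 := by intro h0; apply hne; rw [h0]; simp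
    have := Multiset.card_pos.2 this
    omega
  rw [List.getD_eq_getElem?_getD, List.getElem?_reverse (by simpa using List.length_pos_iff.2 hne),
    List.getLast_eq_getElem]
  simp [List.getElem?_eq_getElem hlt]

lemma le_sortedMax {s : Multiset ℝ} {x : ℝ} (hx : x ∈ s) :
    x ≤ ((s.sort (· ≤ ·)).reverse.getD 0 0 : ℝ) := by
  have hmem : x ∈ s.sort (· ≤ ·) := (Multiset.mem_sort _).2 hx
  obtain ⟨h, heq⟩ := sortedMax_aux (List.ne_nil_of_mem hmem)
  rw [heq]
  exact sorted_le_getLast _ (s.pairwise_sort _) x hmem h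

lemma sortedMax_mem {s : Multiset ℝ} (hs : s ≠ 0) :
    ((s.sort (· ≤ ·)).reverse.getD 0 0 : ℝ) ∈ s := by
  have hne : s.sort (· ≤ ·) ≠ [] := by
    intro h; apply hs
    have := congrArg List.length h
    simpa [Multiset.length_sort] using Multiset.card_eq_zero.1 (by simpa using this)
  obtain ⟨h, heq⟩ := sortedMax_aux hne
  rw [heq]
  exact (Multiset.mem_sort _).1 (List.getLast_mem h)

section SpecLemmas
variable {α β : Type*} [Fintype α] [DecidableEq α] [Fintype β]

lemma specNorm_nonneg (A : Matrix α β ℝ) : 0 ≤ specNorm A := Real.sqrt_nonneg _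

lemma specNorm_sq_max (A : Matrix α β ℝ) :
    specNorm A ^ 2 = ((Finset.univ.val.map
      (Matrix.isHermitian_mul_conjTranspose_self A).eigenvalues).sort (· ≤ ·)).reverse.getD 0 0
    ∧ 0 ≤ ((Finset.univ.val.map
      (Matrix.isHermitian_mul_conjTranspose_self A).eigenvalues).sort (· ≤ ·)).reverse.getD 0 0 := by
  have h0 : 0 ≤ ((Finset.univ.val.map
      (Matrix.isHermitian_mul_conjTranspose_self A).eigenvalues).sort (· ≤ ·)).reverse.getD 0 0 := by
    by_cases hα : Nonempty α
    · have hne : (Finset.univ.val.map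
          (Matrix.isHermitian_mul_conjTranspose_self A).eigenvalues) ≠ 0 := by
        simp [Multiset.map_eq_zero, Finset.univ_eq_empty_iff, hα]
      obtain ⟨i, _, hi⟩ := Multiset.mem_map.1 (sortedMax_mem hne)
      rw [← hi]
      exact (Matrix.posSemidef_self_mul_conjTranspose A).eigenvalues_nonneg i
    · have : (Finset.univ : Finset α) = ∅ := Finset.univ_eq_empty_iff.2 (not_nonempty_iff.1 hα)
      simp [this]
  exact ⟨Real.sq_sqrt h0, h0⟩

/-- quadratic-form bound -/
lemma quad_le_specNorm (A : Matrix α β ℝ) (x : α → ℝ) :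
    x ⬝ᵥ ((A * Aᵀ) *ᵥ x) ≤ specNorm A ^ 2 * (x ⬝ᵥ x) := by
  set hA := Matrix.isHermitian_mul_conjTranspose_self A with hhA
  set lam := ((Finset.univ.val.map hA.eigenvalues).sort (· ≤ ·)).reverse.getD 0 0 with hlam
  obtain ⟨hsq, hpos⟩ := specNorm_sq_max A
  set U : Matrix α α ℝ := (hA.eigenvectorUnitary : Matrix α α ℝ) with hUdef
  have hspec : A * Aᵀ = U * diagonal hA.eigenvalues * Uᵀ := by
    have := hA.spectral_theorem
    rw [← Matrix.conjTranspose_eq_transpose_of_trivial A]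
    simpa [Function.comp, Matrix.star_eq_conjTranspose, ← Matrix.conjTranspose_eq_transpose_of_trivial] using this
  have hUU : U * Uᵀ = 1 := by
    rw [← Matrix.conjTranspose_eq_transpose_of_trivial]
    exact Matrix.mem_unitaryGroup_iff.1 hA.eigenvectorUnitary.2
  set y : α → ℝ := Uᵀ *ᵥ x with hy
  have hform : x ⬝ᵥ ((A * Aᵀ) *ᵥ x) = ∑ i, hA.eigenvalues i * (y i)^2 := by
    rw [hspec, ← Matrix.mulVec_mulVec, ← Matrix.mulVec_mulVec]
    rw [Matrix.mulVec_transpose, Matrix.dotProduct_mulVec x U]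
    rw [hy, Matrix.mulVec_transpose]
    simp [Matrix.mulVec_diagonal, dotProduct, mul_comm, sq, mul_assoc]
  have hnorm : y ⬝ᵥ y = x ⬝ᵥ x := by
    rw [hy, Matrix.dotProduct_mulVec, Matrix.vecMul_transpose, Matrix.mulVec_mulVec, hUU,
      Matrix.one_mulVec]
  calc x ⬝ᵥ ((A * Aᵀ) *ᵥ x) = ∑ i, hA.eigenvalues i * (y i)^2 := hform
    _ ≤ ∑ i, lam * (y i)^2 := by
        apply Finset.sum_le_sum
        intro i _
        have hle : hA.eigenvalues i ≤ lam :=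
          le_sortedMax (Multiset.mem_map_of_mem _ (Finset.mem_univ i))
        exact mul_le_mul_of_nonneg_right hle (sq_nonneg _)
    _ = lam * (y ⬝ᵥ y) := by rw [dotProduct, Finset.mul_sum]; simp [sq]
    _ = specNorm A ^ 2 * (x ⬝ᵥ x) := by rw [hnorm, hsq]
end SpecLemmas

lemma frob2_nonneg {m n : Type*} [Fintype m] [Fintype n] (A : Matrix m n ℝ) : 0 ≤ frob2 A :=
  Finset.sum_nonneg fun _ _ => Finset.sum_nonneg fun _ _ => sq_nonneg _

lemma frob2_eq_trace {m n : Type*} [Fintype m] [Fintype n] (A : Matrix m n ℝ) :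
    frob2 A = Matrix.trace (Aᵀ * A) := by
  simp [frob2, Matrix.trace, Matrix.diag, Matrix.mul_apply, sq]
  rw [Finset.sum_comm]

lemma frob2_mul_le {α β γ : Type*} [Fintype α] [Fintype β] [DecidableEq β] [Fintype γ]
    (A : Matrix α β ℝ) (B : Matrix β γ ℝ) :
    frob2 (A * B) ≤ frob2 A * specNorm B ^ 2 := by
  have hrow : ∀ i, ∑ j, (A * B) i j ^ 2 = (A i) ⬝ᵥ ((B * Bᵀ) *ᵥ (A i)) := by
    intro i
    simp only [Matrix.mul_apply, dotProduct, Matrix.mulVec, Matrix.transpose_apply, sq,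
      Finset.sum_mul, Finset.mul_sum]
    rw [Finset.sum_comm]
    apply Finset.sum_congr rfl
    intro k _
    rw [Finset.sum_comm]
    apply Finset.sum_congr rfl
    intro l _
    apply Finset.sum_congr rfl
    intro j _
    ring
  calc frob2 (A * B) = ∑ i, (A i) ⬝ᵥ ((B * Bᵀ) *ᵥ (A i)) := by
        unfold frob2; exact Finset.sum_congr rfl fun i _ => hrow i
    _ ≤ ∑ i, specNorm B ^ 2 * ((A i) ⬝ᵥ (A i)) :=
        Finset.sum_le_sum fun i _ => quad_le_specNorm B (A i)
    _ = frob2 A * specNorm B ^ 2 := by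
        rw [frob2, Finset.sum_mul]
        apply Finset.sum_congr rfl
        intro i _
        rw [dotProduct, Finset.mul_sum, Finset.sum_mul]
        apply Finset.sum_congr rfl
        intro j _
        ring

lemma isUnit_of_rank_eq_card {k : Type*} [Fintype k] [DecidableEq k] (A : Matrix k k ℝ)
    (h : A.rank = Fintype.card k) : IsUnit A := by
  have hrange : LinearMap.range A.mulVecLin = ⊤ := by
    apply Submodule.eq_top_of_finrank_eq
    rw [← Matrix.rank, h, Module.finrank_pi]
  have hsurj : Function.Surjective A.mulVecLin := LinearMap.range_eq_top.1 hrange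
  choose w hw using hsurj
  set B : Matrix k k ℝ := Matrix.of (fun i j => w (Pi.single j 1) i) with hB
  have hAB : A * B = 1 := by
    ext i j
    have := congrFun (hw (Pi.single j 1)) i
    simp only [Matrix.mulVecLin_apply, Matrix.mulVec, dotProduct] at this
    simp [Matrix.mul_apply, hB, Matrix.one_apply, this, Pi.single_apply, eq_comm]
  exact ⟨⟨A, B, hAB, mul_eq_one_comm.1 hAB⟩, rfl⟩

section JJ

noncomputable def J1 (m r : ℕ) (hrm : r ≤ m) : Matrix (Fin r) (Fin m) ℝ :=
  Matrix.of fun i k => if (Fin.castLE hrm i : Fin m) = k then 1 else 0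

noncomputable def J2 (m r : ℕ) : Matrix (Fin (m - r)) (Fin m) ℝ :=
  Matrix.of fun i k => if k.1 = r + i.1 then 1 else 0

lemma J1_mul {m r : ℕ} (hrm : r ≤ m) {c : Type*} [Fintype c] (M : Matrix (Fin m) c ℝ) :
    J1 m r hrm * M = Matrix.of fun i j => M (Fin.castLE hrm i) j := by
  ext i j
  simp [J1, Matrix.mul_apply, ite_mul]

lemma J2_mul {m r : ℕ} (hrm : r ≤ m) {c : Type*} [Fintype c] (M : Matrix (Fin m) c ℝ) :
    J2 m r * M = Matrix.of fun i j => M ⟨r + i.1, by omega⟩ j := by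
  ext i j
  rw [Matrix.mul_apply, Finset.sum_eq_single (⟨r + i.1, by omega⟩ : Fin m)]
  · simp [J2]
  · intro b _ hb
    have : b.1 ≠ r + i.1 := fun h => hb (Fin.ext h)
    simp [J2, this]
  · simp

lemma J1_sq {m r : ℕ} (hrm : r ≤ m) : J1 m r hrm * (J1 m r hrm)ᵀ = 1 := by
  ext i j
  rw [Matrix.mul_apply, Finset.sum_eq_single (Fin.castLE hrm i)]
  · simp [J1, Matrix.one_apply, Fin.ext_iff, eq_comm]
  · intro b _ hb
    simp [J1, hb, Ne.symm hb]
  · simp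

lemma J2_sq {m r : ℕ} (hrm : r ≤ m) : J2 m r * (J2 m r)ᵀ = 1 := by
  ext i j
  rw [Matrix.mul_apply, Finset.sum_eq_single (⟨r + i.1, by omega⟩ : Fin m)]
  · simp [J2, Matrix.one_apply, Fin.ext_iff]
  · intro b _ hb
    have : b.1 ≠ r + i.1 := fun h => hb (Fin.ext h)
    simp [J2, this]
  · simp

lemma J1_J2 {m r : ℕ} (hrm : r ≤ m) : J1 m r hrm * (J2 m r)ᵀ = 0 := by
  ext i j
  rw [Matrix.mul_apply, Matrix.zero_apply]
  apply Finset.sum_eq_zero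
  intro b _
  by_cases h1 : (Fin.castLE hrm i : Fin m) = b
  · have h2 : ¬ b.1 = r + j.1 := by
      have := i.2
      simp [Fin.ext_iff] at h1
      omega
    simp [J1, J2, h1, h2]
  · simp [J1, J2, h1]

lemma Jsum {m r : ℕ} (hrm : r ≤ m) : (J1 m r hrm)ᵀ * J1 m r hrm + (J2 m r)ᵀ * J2 m r = 1 := by
  ext k l
  simp only [Matrix.add_apply, Matrix.mul_apply, Matrix.transpose_apply]
  by_cases hk : k.1 < r
  · have h1 : ∑ i : Fin r, J1 m r hrm i k * J1 m r hrm i l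
        = if k = l then 1 else 0 := by
      rw [Finset.sum_eq_single (⟨k.1, hk⟩ : Fin r)]
      · have hek : (Fin.castLE hrm (⟨k.1, hk⟩ : Fin r) : Fin m) = k := Fin.ext rfl
        simp [J1, hek]
      · intro b _ hb
        have : (Fin.castLE hrm b : Fin m) ≠ k := by
          intro h; apply hb; apply Fin.ext; simpa [Fin.ext_iff] using h
        simp [J1, this]
      · simp
    have h2 : ∑ i : Fin (m - r), J2 m r i k * J2 m r i l = 0 := by
      apply Finset.sum_eq_zero; intro b _
      have : ¬ k.1 = r + b.1 := by omega
      simp [J2, this]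
    rw [h1, h2, add_zero, Matrix.one_apply]
  · have h1 : ∑ i : Fin r, J1 m r hrm i k * J1 m r hrm i l = 0 := by
      apply Finset.sum_eq_zero; intro b _
      have : (Fin.castLE hrm b : Fin m) ≠ k := by
        intro h; simp [Fin.ext_iff] at h; omega
      simp [J1, this]
    have h2 : ∑ i : Fin (m - r), J2 m r i k * J2 m r i l
        = if k = l then 1 else 0 := by
      have hk2 : k.1 - r < m - r := by omega
      have c1 : k.1 = r + ((⟨k.1 - r, hk2⟩ : Fin (m - r))).1 := by simp; omega
      rw [Finset.sum_eq_single (⟨k.1 - r, hk2⟩ : Fin (m - r))]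
      · simp only [J2, Matrix.of_apply, if_pos c1, one_mul]
        by_cases hkl : k = l
        · subst hkl; simp [← c1]
        · have hl : ¬ l.1 = r + ((⟨k.1 - r, hk2⟩ : Fin (m - r))).1 := by
            intro h; apply hkl; apply Fin.ext; simp at h c1; omega
          simp [hl, hkl]
      · intro b _ hb
        have : ¬ k.1 = r + b.1 := by
          intro h; apply hb; apply Fin.ext; simp; omega
        simp [J2, this]
      · simp
    rw [h1, h2, zero_add, Matrix.one_apply]

lemma J1_diag {m r : ℕ} (hrm : r ≤ m) (σ : Fin m → ℝ) :
    J1 m r hrm * Matrix.diagonal σ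
      = Matrix.diagonal (fun i : Fin r => σ (Fin.castLE hrm i)) * J1 m r hrm := by
  rw [J1_mul]
  ext i k
  rw [Matrix.diagonal_mul]
  by_cases h : (Fin.castLE hrm i : Fin m) = k
  · simp [Matrix.diagonal_apply, J1, h]
  · simp [Matrix.diagonal_apply, J1, h]

lemma J2_diag {m r : ℕ} (hrm : r ≤ m) (σ : Fin m → ℝ) :
    J2 m r * Matrix.diagonal σ
      = Matrix.diagonal (fun i : Fin (m - r) => σ ⟨r + i.1, by omega⟩) * J2 m r := by
  rw [J2_mul hrm]
  ext i k
  rw [Matrix.diagonal_mul]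
  by_cases h : k.1 = r + i.1
  · have : (⟨r + i.1, by omega⟩ : Fin m) = k := Fin.ext h.symm
    simp [Matrix.diagonal_apply, J2, h, this]
  · have : (⟨r + i.1, by omega⟩ : Fin m) ≠ k := fun hh => h (by simpa [Fin.ext_iff, eq_comm] using hh)
    simp [Matrix.diagonal_apply, J2, h, this]

lemma diag_J1 {m r : ℕ} (hrm : r ≤ m) (σ : Fin m → ℝ) :
    Matrix.diagonal σ * (J1 m r hrm)ᵀ
      = (J1 m r hrm)ᵀ * Matrix.diagonal (fun i : Fin r => σ (Fin.castLE hrm i)) := by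
  have := congrArg Matrix.transpose (J1_diag hrm σ)
  simpa [Matrix.transpose_mul, Matrix.diagonal_transpose] using this

lemma diag_J2 {m r : ℕ} (hrm : r ≤ m) (σ : Fin m → ℝ) :
    Matrix.diagonal σ * (J2 m r)ᵀ
      = (J2 m r)ᵀ * Matrix.diagonal (fun i : Fin (m - r) => σ ⟨r + i.1, by omega⟩) := by
  have := congrArg Matrix.transpose (J2_diag hrm σ)
  simpa [Matrix.transpose_mul, Matrix.diagonal_transpose] using this
end JJ

lemma frob2_unitary_left {a b c : Type*} [Fintype a] [Fintype b] [DecidableEq b] [Fintype c]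
    {W : Matrix a b ℝ} (hW : Wᵀ * W = 1) (M : Matrix b c ℝ) :
    frob2 (W * M) = frob2 M := by
  rw [frob2_eq_trace, frob2_eq_trace, Matrix.transpose_mul, Matrix.mul_assoc,
    ← Matrix.mul_assoc Wᵀ W M, hW, Matrix.one_mul]

lemma frob2_unitary_right {a b c : Type*} [Fintype a] [Fintype b] [DecidableEq b] [Fintype c]
    {W : Matrix b c ℝ} (hW : W * Wᵀ = 1) (M : Matrix a b ℝ) :
    frob2 (M * W) = frob2 M := by
  rw [frob2_eq_trace, frob2_eq_trace, Matrix.transpose_mul, Matrix.trace_mul_comm,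
    Matrix.mul_assoc, ← Matrix.mul_assoc W Wᵀ Mᵀ, hW, Matrix.one_mul, Matrix.trace_mul_comm]
end Auxiliary

/-- Deterministic error bound for the randomized range finder (Halko–Martinsson–Tropp,
Thm. 9.1).  With the SVD of `X` partitioned at rank `r` as `X = U diag(σ) Vᵀ`,
`V₁`/`V₂` the first `r`/remaining columns of `V`, `Ω₁ = V₁ᵀΩ`, `Ω₂ = V₂ᵀΩ`, `Ω₁` of full
row rank, and `Q` an orthonormal basis for `range(XΩ)`:
`‖X − QQᵀX‖_F² ≤ (1 + ‖Ω₂‖₂² ‖Ω₁†‖₂²) ‖Σ₂‖_F²`. -/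
theorem hmt_deterministic_bound
    (m n r ℓ p : ℕ) (hr : r < min m n)
    (X : Matrix (Fin m) (Fin n) ℝ)
    (U : Matrix (Fin m) (Fin m) ℝ) (hU : Uᵀ * U = 1)
    (V : Matrix (Fin n) (Fin m) ℝ) (hV : Vᵀ * V = 1)
    (σ : Fin m → ℝ) (hσ0 : ∀ i, 0 ≤ σ i)
    (hσmono : ∀ i j : Fin m, i ≤ j → σ j ≤ σ i)
    (hX : X = U * Matrix.diagonal σ * Vᵀ)
    (Om : Matrix (Fin n) (Fin ℓ) ℝ)
    (V₁ : Matrix (Fin n) (Fin r) ℝ)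
    (hV₁ : V₁ = V.submatrix id (fun i : Fin r => Fin.castLE (by omega) i))
    (V₂ : Matrix (Fin n) (Fin (m - r)) ℝ)
    (hV₂ : V₂ = V.submatrix id (fun i : Fin (m - r) => (⟨r + i.1, by omega⟩ : Fin m)))
    (Om₁ : Matrix (Fin r) (Fin ℓ) ℝ) (hOm₁ : Om₁ = V₁ᵀ * Om)
    (Om₂ : Matrix (Fin (m - r)) (Fin ℓ) ℝ) (hOm₂ : Om₂ = V₂ᵀ * Om)
    (hrank : Om₁.rank = r)
    (Q : Matrix (Fin m) (Fin p) ℝ) (hQ : Qᵀ * Q = 1)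
    (hrange : LinearMap.range (Matrix.mulVecLin Q)
      = LinearMap.range (Matrix.mulVecLin (X * Om))) :
    frob2 (X - Q * Qᵀ * X)
      ≤ (1 + specNorm Om₂ ^ 2 * specNorm (pinvFullRowRank Om₁) ^ 2) *
          ∑ i ∈ Finset.univ.filter (fun i : Fin m => r ≤ i.1), σ i ^ 2 := by
  have hrm : r ≤ m := by omega
  have hrn : r ≤ n := by omega
  set P : Matrix (Fin m) (Fin m) ℝ := Q * Qᵀ with hPdef
  set S1 : Matrix (Fin r) (Fin r) ℝ :=
    Matrix.diagonal (fun i : Fin r => σ (Fin.castLE hrm i)) with hS1def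
  set S2 : Matrix (Fin (m - r)) (Fin (m - r)) ℝ :=
    Matrix.diagonal (fun i : Fin (m - r) => σ ⟨r + i.1, by omega⟩) with hS2def
  set piv : Matrix (Fin ℓ) (Fin r) ℝ := pinvFullRowRank Om₁ with hpivdef
  set Z : Matrix (Fin m) (Fin n) ℝ := X * Om * (piv * V₁ᵀ) with hZdef
  set E : Matrix (Fin m) (Fin n) ℝ := X - Z with hEdef
  set G : Matrix (Fin (m - r)) (Fin r) ℝ := S2 * Om₂ * piv with hGdef
  -- basic transpose facts
  have hV₁t : V₁ᵀ = J1 m r hrm * Vᵀ := by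
    rw [hV₁, J1_mul hrm]
    ext i j
    simp
  have hV₂t : V₂ᵀ = J2 m r * Vᵀ := by
    rw [hV₂, J2_mul hrm]
    ext i j
    simp
  have hV₁e : V₁ = V * (J1 m r hrm)ᵀ := by
    have := congrArg Matrix.transpose hV₁t
    simpa [Matrix.transpose_mul] using this
  have hV₂e : V₂ = V * (J2 m r)ᵀ := by
    have := congrArg Matrix.transpose hV₂t
    simpa [Matrix.transpose_mul] using this
  have hV1V1 : V₁ᵀ * V₁ = 1 := by
    rw [hV₁t, hV₁e, Matrix.mul_assoc, ← Matrix.mul_assoc Vᵀ V _, hV, Matrix.one_mul, J1_sq hrm]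
  have hV2V2 : V₂ᵀ * V₂ = 1 := by
    rw [hV₂t, hV₂e, Matrix.mul_assoc, ← Matrix.mul_assoc Vᵀ V _, hV, Matrix.one_mul, J2_sq hrm]
  have hV1V2 : V₁ᵀ * V₂ = 0 := by
    rw [hV₁t, hV₂e, Matrix.mul_assoc, ← Matrix.mul_assoc Vᵀ V _, hV, Matrix.one_mul, J1_J2 hrm]
  have hV2V1 : V₂ᵀ * V₁ = 0 := by
    have := congrArg Matrix.transpose hV1V2
    simpa [Matrix.transpose_mul] using this
  -- pseudo-inverse fact
  have hOmpinv : Om₁ * piv = 1 := by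
    have h5 : (Om₁ * Om₁ᵀ).rank = r := by
      rw [Matrix.rank_self_mul_transpose, hrank]
    have hud := isUnit_of_rank_eq_card (Om₁ * Om₁ᵀ) (by rw [h5, Fintype.card_fin])
    have hdet : IsUnit (Om₁ * Om₁ᵀ).det := (Matrix.isUnit_iff_isUnit_det _).1 hud
    rw [hpivdef, pinvFullRowRank, ← Matrix.mul_assoc, Matrix.mul_nonsing_inv _ hdet]
  -- P fixes the range of X * Om
  have hPXOm : P * (X * Om) = X * Om := by
    have hcol : ∀ j, ∃ w, Q *ᵥ w = fun i => (X * Om) i j := by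
      intro j
      have hmem : (fun i => (X * Om) i j) ∈ LinearMap.range (Matrix.mulVecLin (X * Om)) := by
        refine ⟨Pi.single j 1, ?_⟩
        ext i
        simp [Matrix.mulVecLin_apply, Matrix.mulVec, dotProduct, Pi.single_apply, Matrix.mul_apply]
      rw [← hrange] at hmem
      obtain ⟨w, hw⟩ := hmem
      exact ⟨w, hw⟩
    ext i j
    obtain ⟨w, hw⟩ := hcol j
    have h1 : (P * (X * Om)) i j = (P *ᵥ (fun i => (X * Om) i j)) i := by
      simp [Matrix.mul_apply, Matrix.mulVec, dotProduct]
    have h2 : P * Q = Q := by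
      rw [hPdef, Matrix.mul_assoc, hQ, Matrix.mul_one]
    rw [h1, ← hw, Matrix.mulVec_mulVec, h2, hw]
  have hPZ : P * Z = Z := by
    rw [hZdef, ← Matrix.mul_assoc, hPXOm]
  have hPsymm : Pᵀ = P := by
    rw [hPdef, Matrix.transpose_mul, Matrix.transpose_transpose]
  have hPP : P * P = P := by
    have h3 : Qᵀ * (Q * Qᵀ) = Qᵀ := by rw [← Matrix.mul_assoc, hQ, Matrix.one_mul]
    rw [hPdef, Matrix.mul_assoc Q Qᵀ (Q * Qᵀ), h3]
  -- projection inequality: frob2 (X - P*X) ≤ frob2 E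
  have hproj : frob2 (X - P * X) ≤ frob2 E := by
    have hkey : X - P * X = (1 - P) * E := by
      rw [hEdef, Matrix.sub_mul, Matrix.one_mul, Matrix.mul_sub, hPZ]
      abel
    have hip : (1 - P)ᵀ * (1 - P) = 1 - P := by
      rw [Matrix.transpose_sub, Matrix.transpose_one, hPsymm, Matrix.sub_mul, Matrix.one_mul,
        Matrix.mul_sub, Matrix.mul_one, hPP]
      abel
    have hexp : ((1 - P) * E)ᵀ * ((1 - P) * E) = Eᵀ * E - (Qᵀ * E)ᵀ * (Qᵀ * E) := by
      rw [Matrix.transpose_mul, Matrix.mul_assoc, ← Matrix.mul_assoc (1 - P)ᵀ (1 - P) E, hip,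
        Matrix.sub_mul, Matrix.one_mul, Matrix.mul_sub]
      congr 1
      rw [Matrix.transpose_mul, Matrix.transpose_transpose, hPdef]
      rw [Matrix.mul_assoc, Matrix.mul_assoc]
    have : frob2 (X - P * X) = frob2 E - frob2 (Qᵀ * E) := by
      rw [hkey, frob2_eq_trace, hexp, Matrix.trace_sub, ← frob2_eq_trace, ← frob2_eq_trace]
    rw [this]
    have := frob2_nonneg (Qᵀ * E)
    linarith
  -- decomposition of E
  have hXd : X = U * ((J1 m r hrm)ᵀ * (S1 * V₁ᵀ) + (J2 m r)ᵀ * (S2 * V₂ᵀ)) := by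
    have hDV : Matrix.diagonal σ * Vᵀ
        = (J1 m r hrm)ᵀ * (S1 * V₁ᵀ) + (J2 m r)ᵀ * (S2 * V₂ᵀ) := by
      conv_lhs => rw [← Matrix.one_mul Vᵀ, ← Jsum hrm]
      rw [Matrix.add_mul, Matrix.mul_add, ← Matrix.mul_assoc, ← Matrix.mul_assoc,
        ← Matrix.mul_assoc, ← Matrix.mul_assoc, diag_J1 hrm σ, diag_J2 hrm σ]
      rw [hV₁t, hV₂t]
      simp only [Matrix.mul_assoc, hS1def, hS2def]
    rw [hX, Matrix.mul_assoc, hDV]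
  have hZd : Z = U * ((J1 m r hrm)ᵀ * (S1 * V₁ᵀ) + (J2 m r)ᵀ * (G * V₁ᵀ)) := by
    have hVO : Vᵀ * Om = (J1 m r hrm)ᵀ * Om₁ + (J2 m r)ᵀ * Om₂ := by
      conv_lhs => rw [← Matrix.one_mul (Vᵀ * Om), ← Jsum hrm]
      rw [Matrix.add_mul, hOm₁, hOm₂, hV₁t, hV₂t]
      simp only [Matrix.mul_assoc]
    have step : Matrix.diagonal σ * (Vᵀ * Om) * (piv * V₁ᵀ)
        = (J1 m r hrm)ᵀ * (S1 * V₁ᵀ) + (J2 m r)ᵀ * (G * V₁ᵀ) := by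
      rw [hVO, Matrix.mul_add, ← Matrix.mul_assoc (Matrix.diagonal σ) _ Om₁,
        ← Matrix.mul_assoc (Matrix.diagonal σ) _ Om₂, diag_J1 hrm σ, diag_J2 hrm σ,
        Matrix.add_mul]
      congr 1
      · -- J1ᵀ * S1 * Om₁ * (piv * V₁ᵀ) = J1ᵀ * (S1 * V₁ᵀ)
        rw [Matrix.mul_assoc ((J1 m r hrm)ᵀ * S1) Om₁ _, ← Matrix.mul_assoc Om₁ piv V₁ᵀ,
          hOmpinv, Matrix.one_mul, Matrix.mul_assoc]
      · rw [Matrix.mul_assoc ((J2 m r)ᵀ * S2) Om₂ _, Matrix.mul_assoc, hGdef]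
        simp only [Matrix.mul_assoc]
    rw [hZdef, hX]
    calc U * Matrix.diagonal σ * Vᵀ * Om * (piv * V₁ᵀ)
        = U * (Matrix.diagonal σ * (Vᵀ * Om) * (piv * V₁ᵀ)) := by
          simp only [Matrix.mul_assoc]
      _ = U * ((J1 m r hrm)ᵀ * (S1 * V₁ᵀ) + (J2 m r)ᵀ * (G * V₁ᵀ)) := by rw [step]
  have hEd : E = U * ((J2 m r)ᵀ * (S2 * V₂ᵀ - G * V₁ᵀ)) := by
    rw [hEdef, hXd, hZd, ← Matrix.mul_sub]
    congr 1
    rw [Matrix.mul_sub]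
    abel
  -- Frobenius computation
  have hfE : frob2 E = frob2 (S2 * V₂ᵀ - G * V₁ᵀ) := by
    rw [hEd, frob2_unitary_left hU, frob2_unitary_left (by
      rw [Matrix.transpose_transpose]; exact J2_sq hrm)]
  have hcross1 : Matrix.trace ((S2 * V₂ᵀ)ᵀ * (G * V₁ᵀ)) = 0 := by
    rw [Matrix.transpose_mul, Matrix.transpose_transpose, Matrix.mul_assoc, Matrix.trace_mul_comm,
      Matrix.mul_assoc S2ᵀ (G * V₁ᵀ) V₂, Matrix.mul_assoc G V₁ᵀ V₂, hV1V2,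
      Matrix.mul_zero, Matrix.mul_zero, Matrix.trace_zero]
  have hcross2 : Matrix.trace ((G * V₁ᵀ)ᵀ * (S2 * V₂ᵀ)) = 0 := by
    rw [Matrix.transpose_mul, Matrix.transpose_transpose, Matrix.mul_assoc, Matrix.trace_mul_comm,
      Matrix.mul_assoc Gᵀ (S2 * V₂ᵀ) V₁, Matrix.mul_assoc S2 V₂ᵀ V₁, hV2V1,
      Matrix.mul_zero, Matrix.mul_zero, Matrix.trace_zero]
  have hsplit : frob2 (S2 * V₂ᵀ - G * V₁ᵀ) = frob2 (S2 * V₂ᵀ) + frob2 (G * V₁ᵀ) := by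
    rw [frob2_eq_trace, Matrix.transpose_sub, Matrix.sub_mul, Matrix.mul_sub, Matrix.mul_sub,
      Matrix.trace_sub, Matrix.trace_sub, Matrix.trace_sub, hcross1, hcross2,
      ← frob2_eq_trace, ← frob2_eq_trace]
    ring
  have hfA : frob2 (S2 * V₂ᵀ) = frob2 S2 :=
    frob2_unitary_right (by rw [Matrix.transpose_transpose]; exact hV2V2) S2
  have hfB : frob2 (G * V₁ᵀ) = frob2 G :=
    frob2_unitary_right (by rw [Matrix.transpose_transpose]; exact hV1V1) G
  have hfS2 : frob2 S2 = ∑ i ∈ Finset.univ.filter (fun i : Fin m => r ≤ i.1), σ i ^ 2 := by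
    have h1 : frob2 S2 = ∑ j : Fin (m - r), σ ⟨r + j.1, by omega⟩ ^ 2 := by
      rw [hS2def, frob2]
      apply Finset.sum_congr rfl
      intro i _
      rw [Finset.sum_eq_single i]
      · simp [Matrix.diagonal_apply]
      · intro b _ hb
        simp [Matrix.diagonal_apply, Ne.symm hb]
      · simp
    rw [h1]
    refine Finset.sum_nbij' (fun j : Fin (m - r) => (⟨r + j.1, by omega⟩ : Fin m))
      (fun i : Fin m => if h : r ≤ i.1 then (⟨i.1 - r, by omega⟩ : Fin (m - r))
        else ⟨0, by omega⟩) ?_ ?_ ?_ ?_ ?_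
    · intro a _
      simp only [Finset.mem_filter, Finset.mem_univ, true_and]
      omega
    · intro a _
      simp
    · intro a _
      dsimp only
      rw [dif_pos (by omega : r ≤ r + a.1)]
      apply Fin.ext
      simp
    · intro a ha
      simp only [Finset.mem_filter, Finset.mem_univ, true_and] at ha
      rw [dif_pos ha]
      apply Fin.ext
      simp
      omega
    · intro a _
      rfl
  have hG1 : frob2 G ≤ frob2 (S2 * Om₂) * specNorm piv ^ 2 := by
    rw [hGdef]
    exact frob2_mul_le _ _
  have hG2 : frob2 (S2 * Om₂) ≤ frob2 S2 * specNorm Om₂ ^ 2 := frob2_mul_le _ _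
  have hG3 : frob2 G ≤ frob2 S2 * specNorm Om₂ ^ 2 * specNorm piv ^ 2 :=
    le_trans hG1 (mul_le_mul_of_nonneg_right hG2 (sq_nonneg _))
  have hfinal : frob2 (X - P * X) ≤ frob2 S2 + frob2 G := by
    rw [hfE, hsplit, hfA, hfB] at hproj
    exact hproj
  rw [← hfS2]
  have hexpand : (1 + specNorm Om₂ ^ 2 * specNorm piv ^ 2) * frob2 S2
      = frob2 S2 + frob2 S2 * specNorm Om₂ ^ 2 * specNorm piv ^ 2 := by ring
  rw [hexpand]
  linarith
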